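/- arXiv:1807.09486 — 2 statements merged into one kernel-verified Lean document; each statement's English description precedes it below -/
import Mathlib

section
/- The variance of the limiting distribution of the Möbius function equals 6/π²: the averages (1/n)·∑_{k=1}^{n} μ(k)² converge to 6/π² as n → ∞; equivalently, the set of squarefree positive integers has natural density 6/π². -/
/-!
Since `μ(k)² = ∑_{d² ∣ k} μ(d)`, counting the multiples of `d²` up to `N` gives
`∑_{k ≤ N} μ(k)² = ∑_d μ(d) ⌊N / d²⌋`. After dividing by `N`, the `d`-th term tends to
`μ(d) / d²` and is dominated by `1 / d²`, so by dominated convergence for series (Tannery's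
theorem) the averages tend to `∑_d μ(d) / d² = 1 / ζ(2) = 6 / π²`.
-/

open Filter ArithmeticFunction Real

open Finset Topology
open scoped ArithmeticFunction.Moebius

lemma Nat.sq_dvd_sq_mul_iff_dvd {a b d : ℕ} (ha : Squarefree a) :
    d ^ 2 ∣ b ^ 2 * a ↔ d ∣ b := by
  refine ⟨fun h => ?_, fun h => dvd_mul_of_dvd_left (pow_dvd_pow_of_dvd h 2) a⟩
  rcases eq_or_ne b 0 with rfl | hb
  · exact dvd_zero d
  have ha0 := ha.ne_zero
  have hd : d ≠ 0 := by rintro rfl; simp [hb, ha0] at h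
  rw [← Nat.factorization_le_iff_dvd (pow_ne_zero 2 hd) (by positivity),
    Nat.factorization_mul (pow_ne_zero 2 hb) ha0, Nat.factorization_pow,
    Nat.factorization_pow] at h
  rw [← Nat.factorization_le_iff_dvd hd hb]
  intro p
  have hp := h p
  have := ha.natFactorization_le_one p
  simp only [Finsupp.coe_add, Finsupp.coe_smul, Pi.add_apply, Pi.smul_apply, smul_eq_mul] at hp
  omega

lemma Nat.squarefree_sq_mul_iff {a b : ℕ} (ha : Squarefree a) :
    Squarefree (b ^ 2 * a) ↔ b = 1 := by
  refine ⟨fun h => Nat.isUnit_iff.1 (h b ⟨a, by ring⟩), ?_⟩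
  rintro rfl
  simpa using ha

lemma natCast_div_div_natCast_le (N m : ℕ) : ((N / m : ℕ) : ℝ) / N ≤ 1 / m := by
  rcases eq_or_ne N 0 with rfl | hN
  · simp
  calc ((N / m : ℕ) : ℝ) / N ≤ (N / m : ℝ) / N := by gcongr; exact Nat.cast_div_le
    _ = 1 / m := by field_simp

lemma tendsto_natCast_div_div_natCast (m : ℕ) :
    Tendsto (fun N : ℕ => ((N / m : ℕ) : ℝ) / N) atTop (𝓝 (1 / m)) := by
  refine ((tendsto_nat_floor_mul_div_atTop (R := ℝ) (a := 1 / m) (by positivity)).comp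
    tendsto_natCast_atTop_atTop).congr fun N => ?_
  rw [Function.comp_apply, one_div_mul_eq_div, Nat.floor_div_eq_div]

theorem tendsto_tsum_mul_natCast_div_div {c : ℕ → ℝ} {w : ℕ → ℕ}
    (hc : Summable fun d => |c d| / w d) :
    Tendsto (fun N : ℕ => ∑' d, c d * (((N / w d : ℕ) : ℝ) / N)) atTop
      (𝓝 (∑' d, c d / w d)) := by
  refine tendsto_tsum_of_dominated_convergence hc (fun d => ?_) (.of_forall fun N d => ?_)
  · simpa [div_eq_mul_one_div (c d)] using
      (tendsto_natCast_div_div_natCast (w d)).const_mul (c d)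
  · have hnonneg : (0 : ℝ) ≤ (N / w d : ℕ) / N := by positivity
    rw [Real.norm_eq_abs, abs_mul, abs_of_nonneg hnonneg, div_eq_mul_one_div |c d|]
    exact mul_le_mul_of_nonneg_left (natCast_div_div_natCast_le N (w d)) (abs_nonneg _)

namespace ArithmeticFunction

lemma sum_divisors_moebius (n : ℕ) : ∑ d ∈ n.divisors, μ d = if n = 1 then 1 else 0 := by
  rw [← coe_mul_zeta_apply, moebius_mul_coe_zeta, one_apply]

lemma moebius_sq_eq_sum_sq_dvd {k N : ℕ} (hk : k ∈ Ioc 0 N) :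
    μ k ^ 2 = ∑ d ∈ Ioc 0 N with d ^ 2 ∣ k, μ d := by
  obtain ⟨a, b, rfl, ha⟩ := Nat.sq_mul_squarefree k
  have hk0 : 0 < b ^ 2 * a := (mem_Ioc.1 hk).1
  have hb : 0 < b := Nat.pos_of_ne_zero <| by rintro rfl; simp at hk0
  have hbN : b ≤ N := calc
    b ≤ b ^ 2 * a := Nat.le_of_dvd hk0 ⟨b * a, by ring⟩
    _ ≤ N := (mem_Ioc.1 hk).2
  have hdivisors : {d ∈ Ioc 0 N | d ^ 2 ∣ b ^ 2 * a} = b.divisors := by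
    ext d
    simp only [mem_filter, mem_Ioc, Nat.mem_divisors, Nat.sq_dvd_sq_mul_iff_dvd ha]
    exact ⟨fun h => ⟨h.2, hb.ne'⟩, fun h =>
      ⟨⟨Nat.pos_of_dvd_of_pos h.1 hb, (Nat.le_of_dvd hb h.1).trans hbN⟩, h.1⟩⟩
  rw [hdivisors, sum_divisors_moebius, moebius_sq]
  simp only [Nat.squarefree_sq_mul_iff ha]

lemma sum_moebius_sq_eq_sum_mul_div {R : Type*} [Ring R] (N : ℕ) :
    ∑ k ∈ Ioc 0 N, (μ k : R) ^ 2 = ∑ d ∈ Ioc 0 N, (μ d : R) * (N / d ^ 2 : ℕ) :=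
  calc ∑ k ∈ Ioc 0 N, (μ k : R) ^ 2
      = ∑ k ∈ Ioc 0 N, ∑ d ∈ Ioc 0 N with d ^ 2 ∣ k, (μ d : R) :=
        sum_congr rfl fun _ hk => by
          rw [← Int.cast_pow, moebius_sq_eq_sum_sq_dvd hk, Int.cast_sum]
    _ = ∑ d ∈ Ioc 0 N, ∑ k ∈ Ioc 0 N with d ^ 2 ∣ k, (μ d : R) := by
        simp only [sum_filter]; exact sum_comm
    _ = ∑ d ∈ Ioc 0 N, (μ d : R) * (N / d ^ 2 : ℕ) := by
        simp only [sum_const, Nat.Ioc_filter_dvd_card_eq_div, nsmul_eq_mul']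

lemma sum_moebius_sq_div_eq_tsum (N : ℕ) :
    (∑ k ∈ Ioc 0 N, (μ k : ℝ) ^ 2) / N = ∑' d, μ d * (((N / d ^ 2 : ℕ) : ℝ) / N) := by
  rw [tsum_eq_sum (s := Ioc 0 N)]
  · simp only [← mul_div_assoc, ← sum_div, sum_moebius_sq_eq_sum_mul_div]
  intro d hd
  rcases Nat.eq_zero_or_pos d with rfl | hd0
  · simp
  have hdN : N < d := by simpa [hd0] using hd
  have hNd : N < d ^ 2 := hdN.trans_le (Nat.le_self_pow two_ne_zero d)
  simp [Nat.div_eq_of_lt hNd]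

lemma summable_abs_moebius_div_sq : Summable fun d : ℕ => |(μ d : ℝ)| / d ^ 2 :=
  (summable_one_div_nat_pow.2 one_lt_two).of_nonneg_of_le (fun _ => by positivity)
    fun _ => div_le_div_of_nonneg_right (by exact_mod_cast abs_moebius_le_one) (by positivity)

lemma tsum_moebius_div_sq : ∑' d : ℕ, (μ d : ℝ) / d ^ 2 = 6 / π ^ 2 := by
  have hs : 1 < (2 : ℂ).re := by norm_num
  have hL := LSeries_one_mul_Lseries_moebius hs
  rw [LSeries_one_eq_riemannZeta hs, riemannZeta_two] at hL
  have hterm (n : ℕ) :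
      LSeries.term (fun n => (μ n : ℂ)) 2 n = (((μ n : ℝ) / n ^ 2 : ℝ) : ℂ) := by
    rcases eq_or_ne n 0 with rfl | hn
    · simp
    · rw [LSeries.term_of_ne_zero hn]
      norm_cast
  apply Complex.ofReal_injective
  rw [Complex.ofReal_tsum, ← tsum_congr hterm]
  change LSeries _ 2 = _
  have hπ : (π : ℂ) ≠ 0 := Complex.ofReal_ne_zero.2 pi_ne_zero
  push_cast
  field_simp at hL ⊢
  linear_combination hL

end ArithmeticFunction

theorem moebius_sq_average_tendsto :
    Tendsto
      (fun n : ℕ => (∑ k ∈ Finset.Icc 1 n, ((moebius k : ℝ)) ^ 2) / n)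
      atTop (nhds (6 / π ^ 2)) := by
  have h := tendsto_tsum_mul_natCast_div_div (c := fun d => (μ d : ℝ)) (w := fun d => d ^ 2)
    (by exact_mod_cast summable_abs_moebius_div_sq)
  push_cast at h
  rw [tsum_moebius_div_sq] at h
  exact h.congr fun N => (sum_moebius_sq_div_eq_tsum N).symm
end

section
/- If there exists a constant C > 0 such that the Liouville summation function satisfies |L(x)| ≤ C·x^{1/2}·log x for all real x ≥ 2, then the Riemann hypothesis holds: every zero s of the Riemann zeta function with 0 < Re s < 1 satisfies Re s = 1/2. -/
/-!
`λ` is completely multiplicative with `λ(p) = -1`, so comparing Euler products gives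
`(∑ λ(n) n^{-s}) ζ(s) = ζ(2s)` for `Re s > 1`. Partial summation writes the series as
`s ∫₁^∞ L(t) t^{-s-1} dt`, and the bound `L(t) = O(t^{1/2} log t)` makes this holomorphic on
`Re s > 1/2`. By analytic continuation the identity persists there, so a zero of `ζ` with
`Re s > 1/2` would be a zero of `ζ(2s)` with `Re 2s > 1`, which is impossible. The functional
equation reflects zeros with `0 < Re s < 1/2` to zeros with `Re s > 1/2`.
-/

/-- The Liouville function `λ(k) = (-1)^Ω(k)`. -/
noncomputable def liouville (k : ℕ) : ℤ := (-1) ^ k.primeFactorsList.length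

/-- The Liouville summation function `L(x) = ∑_{k ≤ x} λ(k)` for real `x`. -/
noncomputable def L (x : ℝ) : ℤ := ∑ k ∈ Finset.Icc 1 ⌊x⌋₊, liouville k

open Complex Filter Asymptotics MeasureTheory Set Topology

section EulerProduct

variable {s : ℂ}

noncomputable def liouvilleSummandHom (hs : s ≠ 0) : ℕ →*₀ ℂ where
  toFun n := ArithmeticFunction.liouville n * riemannZetaSummandHom hs n
  map_zero' := by simp
  map_one' := by simp [ArithmeticFunction.liouville_apply_one]
  map_mul' m n := by
    simp only [ArithmeticFunction.liouville_apply_mul, map_mul, Int.cast_mul]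
    ring

lemma norm_liouville_le_one (n : ℕ) : ‖(ArithmeticFunction.liouville n : ℂ)‖ ≤ 1 := by
  rcases eq_or_ne n 0 with rfl | hn
  · simp
  · simp [ArithmeticFunction.liouville_apply hn]

lemma LSeries_liouville_eulerProduct_hasProd (hs : 1 < s.re) :
    HasProd (fun p : Nat.Primes ↦ (1 + (p : ℂ) ^ (-s))⁻¹)
      (LSeries (fun n ↦ ArithmeticFunction.liouville n) s) := by
  have hs0 := ne_zero_of_one_lt_re hs
  have hsum : Summable (‖liouvilleSummandHom hs0 ·‖) := by
    refine (summable_riemannZetaSummand hs).of_nonneg_of_le (fun _ ↦ norm_nonneg _) fun n ↦ ?_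
    simp only [liouvilleSummandHom, MonoidWithZeroHom.coe_mk, ZeroHom.coe_mk, norm_mul]
    exact mul_le_of_le_one_left (norm_nonneg _) (norm_liouville_le_one n)
  convert EulerProduct.eulerProduct_completely_multiplicative_hasProd hsum using 1
  · ext p
    simp [liouvilleSummandHom, riemannZetaSummandHom,
      ArithmeticFunction.liouville_apply p.prop.ne_zero,
      ArithmeticFunction.cardFactors_apply_prime p.prop]
  · simp only [liouvilleSummandHom, riemannZetaSummandHom, cpow_neg, MonoidWithZeroHom.coe_mk,
      ZeroHom.coe_mk, LSeries, LSeries.term_of_ne_zero' hs0, div_eq_mul_inv]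

theorem LSeries_liouville_mul_riemannZeta (hs : 1 < s.re) :
    LSeries (fun n ↦ ArithmeticFunction.liouville n) s * riemannZeta s = riemannZeta (2 * s) := by
  have h2s : 1 < (2 * s).re := by
    simp only [mul_re, re_ofNat, im_ofNat, zero_mul, sub_zero]
    linarith
  refine ((LSeries_liouville_eulerProduct_hasProd hs).mul
    (riemannZeta_eulerProduct_hasProd hs)).unique ?_
  convert riemannZeta_eulerProduct_hasProd h2s using 2 with p
  rw [← mul_inv, show -(2 * s) = (2 : ℕ) * -s by push_cast; ring, cpow_nat_mul]
  ring

end EulerProduct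

section Summatory

variable {f : ℕ → ℂ} {s : ℂ}

noncomputable def summatory (f : ℕ → ℂ) (t : ℝ) : ℂ := ∑ k ∈ Finset.Icc 1 ⌊t⌋₊, f k

lemma summatory_of_lt_one (f : ℕ → ℂ) {t : ℝ} (ht : t < 1) : summatory f t = 0 := by
  simp [summatory, Nat.floor_eq_zero.mpr ht]

lemma locallyIntegrableOn_summatory (f : ℕ → ℂ) : LocallyIntegrableOn (summatory f) (Ioi 0) := by
  have h := locallyIntegrableOn_mul_sum_Icc f (m := 1) le_rfl
    (locallyIntegrableOn_const (1 : ℂ) (s := Ici 0))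
  simp only [one_mul] at h
  exact h.mono_set Ioi_subset_Ici_self

lemma mellin_summatory_neg (f : ℕ → ℂ) (s : ℂ) :
    mellin (summatory f) (-s) = ∫ t in Ioi (1 : ℝ), summatory f t * (t : ℂ) ^ (-(s + 1)) := by
  rw [mellin, ← integral_Ici_eq_integral_Ioi (x := (1 : ℝ)),
    setIntegral_eq_of_subset_of_forall_sdiff_eq_zero measurableSet_Ioi
      (Ici_subset_Ioi.mpr zero_lt_one)]
  · refine setIntegral_congr_fun measurableSet_Ici fun t _ ↦ ?_
    rw [smul_eq_mul, mul_comm, neg_add']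
  · intro t ht
    rw [summatory_of_lt_one f (not_le.mp ht.2), smul_zero]

lemma LSeries_eq_mul_mellin_summatory {r : ℝ} (hr : 0 ≤ r) (hs : r < s.re)
    (hO : (fun n ↦ ∑ k ∈ Finset.Icc 1 n, ‖f k‖) =O[atTop] fun n ↦ (n : ℝ) ^ r) :
    LSeries f s = s * mellin (summatory f) (-s) := by
  rw [LSeries_eq_mul_integral' f hr hs hO, mellin_summatory_neg]
  rfl

lemma differentiableAt_mul_mellin_summatory {a : ℝ} (hO : summatory f =O[atTop] (· ^ a))
    (hs : a < s.re) : DifferentiableAt ℂ (fun z ↦ z * mellin (summatory f) (-z)) s := by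
  have h_bot : summatory f =O[𝓝[>] 0] (· ^ (-(-s.re - 1))) :=
    IsBigO.of_bound 0 <| by
      filter_upwards [Ioo_mem_nhdsGT zero_lt_one] with t ht
      simp [summatory_of_lt_one f ht.2]
  have h_mellin : DifferentiableAt ℂ (mellin (summatory f)) (-s) :=
    mellin_differentiableAt_of_isBigO_rpow (a := -a) (locallyIntegrableOn_summatory f)
      (by simpa using hO) (by simpa using hs) h_bot (by simp)
  exact differentiableAt_id.mul (h_mellin.comp s differentiableAt_id.neg)

end Summatory

section LiouvilleBound

variable {C : ℝ}

lemma summatory_liouville :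
    summatory (fun n ↦ ArithmeticFunction.liouville n) = fun t ↦ (L t : ℂ) := by
  ext t
  simp only [summatory, L, Int.cast_sum]
  refine Finset.sum_congr rfl fun k hk ↦ ?_
  rw [ArithmeticFunction.liouville_apply (by grind), liouville,
    ArithmeticFunction.cardFactors_apply]

lemma isBigO_sum_norm_liouville :
    (fun n ↦ ∑ k ∈ Finset.Icc 1 n, ‖(ArithmeticFunction.liouville k : ℂ)‖) =O[atTop]
      fun n ↦ (n : ℝ) ^ (1 : ℝ) := by
  refine IsBigO.of_bound' (Eventually.of_forall fun n ↦ ?_)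
  rw [Real.rpow_one, Real.norm_natCast, Real.norm_of_nonneg (by positivity)]
  calc _ ≤ ∑ k ∈ Finset.Icc 1 n, (1 : ℝ) := Finset.sum_le_sum fun k _ ↦ norm_liouville_le_one k
    _ = n := by simp

lemma LSeries_liouville_eq_mul_mellin {s : ℂ} (hs : 1 < s.re) :
    LSeries (fun n ↦ ArithmeticFunction.liouville n) s =
      s * mellin (fun t ↦ (L t : ℂ)) (-s) := by
  rw [LSeries_eq_mul_mellin_summatory zero_le_one hs isBigO_sum_norm_liouville,
    summatory_liouville]

lemma isBigO_L_rpow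
    (hL : ∀ x : ℝ, 2 ≤ x → |(L x : ℝ)| ≤ C * x ^ ((1 : ℝ) / 2) * Real.log x)
    {σ : ℝ} (hσ : 1 / 2 < σ) : (fun t ↦ (L t : ℂ)) =O[atTop] (· ^ σ) := by
  have h_log : (fun t ↦ (L t : ℂ)) =O[atTop] fun x ↦ x ^ ((1 : ℝ) / 2) * Real.log x :=
    IsBigO.of_bound C <| by
      filter_upwards [eventually_ge_atTop 2] with x hx
      have hlog : 0 ≤ Real.log x := Real.log_nonneg (by linarith)
      rw [norm_intCast, Real.norm_of_nonneg (by positivity), ← mul_assoc]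
      exact hL x hx
  have h_rpow : (fun x ↦ x ^ ((1 : ℝ) / 2) * Real.log x) =O[atTop]
      fun x ↦ x ^ ((1 : ℝ) / 2) * x ^ (σ - 1 / 2) :=
    (isBigO_refl _ _).mul (isLittleO_log_rpow_atTop (by linarith)).isBigO
  refine h_log.trans (h_rpow.congr' EventuallyEq.rfl ?_)
  filter_upwards [eventually_gt_atTop 0] with x hx
  rw [← Real.rpow_add hx]
  ring_nf

lemma differentiableOn_mul_mellin_L
    (hL : ∀ x : ℝ, 2 ≤ x → |(L x : ℝ)| ≤ C * x ^ ((1 : ℝ) / 2) * Real.log x) :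
    DifferentiableOn ℂ (fun s ↦ s * mellin (fun t ↦ (L t : ℂ)) (-s)) {s | 1 / 2 < s.re} := by
  intro s (hs : 1 / 2 < s.re)
  rw [← summatory_liouville]
  refine (differentiableAt_mul_mellin_summatory (a := (1 / 2 + s.re) / 2) ?_
    (by linarith)).differentiableWithinAt
  rw [summatory_liouville]
  exact isBigO_L_rpow hL (by linarith)

end LiouvilleBound

section ZetaZeros

lemma riemannZeta₁_eq_sub_one_mul {s : ℂ} (hs : s ≠ 1) :
    riemannZeta₁ s = (s - 1) * riemannZeta s := by
  rw [riemannZeta_eq_inv_sub_mul hs, mul_inv_cancel_left₀ (sub_ne_zero.mpr hs)]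

theorem riemannZeta_ne_zero_of_mul_eq_riemannZeta_two_mul {F : ℂ → ℂ}
    (hF : DifferentiableOn ℂ F {s | 1 / 2 < s.re})
    (hFζ : ∀ s : ℂ, 1 < s.re → F s * riemannZeta s = riemannZeta (2 * s))
    {s : ℂ} (hs : 1 / 2 < s.re) : riemannZeta s ≠ 0 := by
  set U : Set ℂ := {s | 1 / 2 < s.re}
  -- `ζ` has a pole at `1`, so the identity is continued after multiplying by `s - 1`, which turns
  -- `ζ` into the entire function `riemannZeta₁`.
  have hU : IsOpen U := isOpen_lt continuous_const continuous_re
  have h_eq : EqOn (fun z ↦ F z * riemannZeta₁ z) (fun z ↦ (z - 1) * riemannZeta (2 * z)) U := by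
    refine AnalyticOnNhd.eqOn_of_preconnected_of_eventuallyEq (𝕜 := ℂ) (z₀ := 2) ?_ ?_
      (convex_halfSpace_re_gt _).isPreconnected (by norm_num [U]) ?_
    · exact (hF.mul differentiable_riemannZeta₁.differentiableOn).analyticOnNhd hU
    · refine DifferentiableOn.analyticOnNhd (fun z (hz : 1 / 2 < z.re) ↦ ?_) hU
      have h2z : 2 * z ≠ 1 := fun h ↦ by
        have h_re := congrArg re h
        simp only [mul_re, re_ofNat, im_ofNat, zero_mul, sub_zero, one_re] at h_re
        linarith
      exact ((differentiableAt_id.sub_const 1).mul ((differentiableAt_riemannZeta h2z).comp z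
        (differentiableAt_id.const_mul 2))).differentiableWithinAt
    · filter_upwards [(isOpen_lt continuous_const continuous_re).mem_nhds
        (show (1 : ℝ) < (2 : ℂ).re by norm_num)] with z (hz : 1 < z.re)
      rw [riemannZeta₁_eq_sub_one_mul (fun h ↦ by simp [h] at hz), mul_left_comm, hFζ z hz]
  intro hζ
  have hs1 : s ≠ 1 := fun h ↦ riemannZeta_one_ne_zero (h ▸ hζ)
  have h2s : riemannZeta (2 * s) ≠ 0 := riemannZeta_ne_zero_of_one_lt_re <| by
    simp only [mul_re, re_ofNat, im_ofNat, zero_mul, sub_zero]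
    linarith
  have := h_eq hs
  simp only [riemannZeta₁_eq_sub_one_mul hs1, hζ, mul_zero, zero_eq_mul] at this
  exact this.elim (sub_ne_zero.mpr hs1) h2s

lemma riemannZeta_one_sub_eq_zero {s : ℂ} (h0 : 0 < s.re) (h1 : s ≠ 1)
    (hs : riemannZeta s = 0) : riemannZeta (1 - s) = 0 := by
  have hΛ : completedRiemannZeta s = 0 := by
    have h := riemannZeta_def_of_ne_zero (ne_zero_of_re_pos h0)
    rw [hs, eq_comm, div_eq_zero_iff] at h
    exact h.resolve_right (Gammaℝ_ne_zero_of_re_pos h0)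
  rw [riemannZeta_def_of_ne_zero (sub_ne_zero.mpr h1.symm), completedRiemannZeta_one_sub, hΛ,
    zero_div]

end ZetaZeros

theorem riemann_hypothesis_of_liouville_bound
    (h : ∃ C : ℝ, 0 < C ∧ ∀ x : ℝ, 2 ≤ x →
      |(L x : ℝ)| ≤ C * x ^ ((1 : ℝ) / 2) * Real.log x) :
    ∀ s : ℂ, riemannZeta s = 0 → 0 < s.re → s.re < 1 → s.re = 1 / 2 := by
  obtain ⟨C, -, hL⟩ := h
  have h_nonvanishing : ∀ s : ℂ, 1 / 2 < s.re → riemannZeta s ≠ 0 := fun s ↦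
    riemannZeta_ne_zero_of_mul_eq_riemannZeta_two_mul (differentiableOn_mul_mellin_L hL)
      fun z hz ↦ LSeries_liouville_eq_mul_mellin hz ▸ LSeries_liouville_mul_riemannZeta hz
  intro s hs h0 h1
  have hs1 : s ≠ 1 := fun h ↦ by simp [h] at h1
  rcases lt_trichotomy s.re (1 / 2) with hlt | heq | hgt
  · refine absurd (riemannZeta_one_sub_eq_zero h0 hs1 hs) (h_nonvanishing _ ?_)
    simp only [sub_re, one_re]
    linarith
  · exact heq
  · exact absurd hs (h_nonvanishing s hgt)
end
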